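/- arXiv:1410.6204 — 2 statements merged into one kernel-verified Lean document; each statement's English description precedes it below -/
import Mathlib

section
/- Let K_n be the complete graph on n ≥ 2 vertices and let 0 < p ≤ 1. Then ‖M_{K_n}‖_p = (1 + (n-1)/n^p)^{1/p}. -/
/-!
For `p ≤ 1` the map `t ↦ t ^ p` is subadditive, so the average `A` of `|f|` over the `n`
vertices satisfies `A ^ p ≤ ‖f‖_p ^ p / n ^ p`, and `max (|f v|) A ^ p ≤ |f v| ^ p + A ^ p`.
On the complete graph `M f v = max (|f v|) A`; at a vertex where `|f| ≥ A` the maximum costs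
nothing extra, hence
`‖M f‖_p ^ p ≤ ‖f‖_p ^ p + (n - 1) A ^ p ≤ (1 + (n - 1) / n ^ p) ‖f‖_p ^ p`.
A Kronecker delta attains this bound.
-/

open scoped Classical
open Finset

noncomputable section

variable {V : Type*} [Fintype V]

/-- metric ball of radius `r` centered at `v` in the graph `G` -/
def gBall (G : SimpleGraph V) (v : V) (r : ℕ) : Finset V :=
  Finset.univ.filter fun w => G.dist v w ≤ r

/-- Hardy–Littlewood maximal operator on the graph `G` -/
def maxOp (G : SimpleGraph V) (f : V → ℝ) (v : V) : ℝ :=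
  ⨆ k : Fin (Fintype.card V), (∑ w ∈ gBall G v k.1, |f w|) / ((gBall G v k.1).card : ℝ)

/-- ℓ^p (quasi)norm of a function on the vertices -/
def pNorm (p : ℝ) (f : V → ℝ) : ℝ := (∑ v, |f v| ^ p) ^ (1 / p)

/-- operator (quasi)norm of the maximal operator of `G` on ℓ^p -/
def opNorm (G : SimpleGraph V) (p : ℝ) : ℝ :=
  ⨆ f : {f : V → ℝ // f ≠ 0}, pNorm p (maxOp G f.1) / pNorm p f.1

/-- weak ℓ^p norm -/
def wNorm (p : ℝ) (f : V → ℝ) : ℝ :=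
  ⨆ t : {t : ℝ // 0 < t},
    t.1 * ((Finset.univ.filter fun v => t.1 < |f v|).card : ℝ) ^ (1 / p)

/-- weak-type operator norm of the maximal operator of `G` -/
def wOpNorm (G : SimpleGraph V) (p : ℝ) : ℝ :=
  ⨆ f : {f : V → ℝ // f ≠ 0}, wNorm p (maxOp G f.1) / pNorm p f.1

/-- maximal operator over all graphs on `V` isomorphic to `G` -/
def maxOpIso (G : SimpleGraph V) (f : V → ℝ) (j : V) : ℝ :=
  ⨆ H : {H : SimpleGraph V // Nonempty (H ≃g G)}, maxOp H.1 f j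

/-- operator norm of `maxOpIso` on ℓ^p -/
def opNormIso (G : SimpleGraph V) (p : ℝ) : ℝ :=
  ⨆ f : {f : V → ℝ // f ≠ 0}, pNorm p (maxOpIso G f.1) / pNorm p f.1

/-- Kronecker delta at `k` -/
def kdelta (k : V) : V → ℝ := fun j => if j = k then 1 else 0

/-- star graph on `Fin n` with center `0` -/
def starGraph (n : ℕ) : SimpleGraph (Fin n) :=
  SimpleGraph.fromRel fun i _ => i.1 = 0

/-- diameter of a graph -/
def gDiam (G : SimpleGraph V) : ℕ :=
  Finset.univ.sup fun p : V × V => G.dist p.1 p.2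

/-- dilation index of a graph -/
def dilIndex (G : SimpleGraph V) : ℝ :=
  ⨆ x : V, ⨆ r : {r : ℕ // r ≤ gDiam G},
    ((gBall G x (3 * r.1)).card : ℝ) / ((gBall G x r.1).card : ℝ)

/-- overlapping index of a graph -/
def overlapIndex (G : SimpleGraph V) : ℕ :=
  sInf { r : ℕ | ∀ J : Finset (V × ℕ), ∃ I ⊆ J,
    J.biUnion (fun j => gBall G j.1 j.2) = I.biUnion (fun i => gBall G i.1 i.2) ∧
    ∀ v : V, (I.filter fun i => v ∈ gBall G i.1 i.2).card ≤ r }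

theorem rpow_sum_le_sum_rpow_of_le_one {ι : Type*} (s : Finset ι) {f : ι → ℝ}
    (hf : ∀ i ∈ s, 0 ≤ f i) {p : ℝ} (hp0 : 0 < p) (hp1 : p ≤ 1) :
    (∑ i ∈ s, f i) ^ p ≤ ∑ i ∈ s, f i ^ p :=
  Finset.le_sum_of_subadditive_on_pred (· ^ p) (0 ≤ ·) (Real.zero_rpow hp0.ne').le
    (fun _ _ hx hy => Real.rpow_add_le_add_rpow hx hy hp0.le hp1)
    (fun _ _ => add_nonneg) f hf

theorem max_rpow_le_rpow_add_rpow {x y : ℝ} (hx : 0 ≤ x) (hy : 0 ≤ y) (p : ℝ) :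
    max x y ^ p ≤ x ^ p + y ^ p := by
  rcases max_choice x y with h | h <;> rw [h]
  · exact le_add_of_nonneg_right (Real.rpow_nonneg hy p)
  · exact le_add_of_nonneg_left (Real.rpow_nonneg hx p)

theorem pNorm_pos {p : ℝ} {f : V → ℝ} (hf : f ≠ 0) : 0 < pNorm p f := by
  obtain ⟨v, hv⟩ := Function.ne_iff.mp hf
  refine Real.rpow_pos_of_pos (sum_pos' (fun w _ => by positivity) ⟨v, mem_univ v, ?_⟩) _
  exact Real.rpow_pos_of_pos (abs_pos.mpr hv) p

theorem opNorm_eq_of_le_of_eq {G : SimpleGraph V} {p c : ℝ}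
    (hle : ∀ f : V → ℝ, pNorm p (maxOp G f) ≤ c * pNorm p f) {f₀ : V → ℝ} (hf₀ : f₀ ≠ 0)
    (heq : pNorm p (maxOp G f₀) = c * pNorm p f₀) : opNorm G p = c := by
  have hratio (f : {f : V → ℝ // f ≠ 0}) : pNorm p (maxOp G f.1) / pNorm p f.1 ≤ c :=
    (div_le_iff₀ (pNorm_pos f.2)).mpr (hle f.1)
  have hattained : pNorm p (maxOp G f₀) / pNorm p f₀ = c := by
    rw [heq, mul_div_cancel_right₀ _ (pNorm_pos hf₀).ne']
  have : Nonempty {f : V → ℝ // f ≠ 0} := ⟨⟨f₀, hf₀⟩⟩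
  exact le_antisymm (ciSup_le hratio)
    (hattained.symm.le.trans (le_ciSup ⟨c, Set.forall_mem_range.mpr hratio⟩ ⟨f₀, hf₀⟩))

theorem gBall_top_zero (v : V) : gBall ⊤ v 0 = {v} := by
  ext w
  simp [gBall, SimpleGraph.dist_top, eq_comm]

theorem gBall_top_of_pos (v : V) {k : ℕ} (hk : 0 < k) : gBall ⊤ v k = univ := by
  ext w
  simp only [gBall, SimpleGraph.dist_top, mem_filter, mem_univ, true_and, iff_true]
  split <;> omega

/-- The radii range over `0, …, card V - 1`, so radius `1` is available only when `V` is
nontrivial. -/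
theorem maxOp_top [Nontrivial V] (f : V → ℝ) (v : V) :
    maxOp ⊤ f v = max |f v| ((∑ w, |f w|) / Fintype.card V) := by
  have h2 : 1 < Fintype.card V := Fintype.one_lt_card
  have hball (k : Fin (Fintype.card V)) :
      (∑ w ∈ gBall ⊤ v k.1, |f w|) / ((gBall ⊤ v k.1).card : ℝ)
        = if k.1 = 0 then |f v| else (∑ w, |f w|) / Fintype.card V := by
    split_ifs with hk
    · simp [hk, gBall_top_zero]
    · simp [gBall_top_of_pos v (Nat.pos_of_ne_zero hk)]
  simp only [maxOp, hball]
  have hbdd := (Set.finite_range fun k : Fin (Fintype.card V) =>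
    if k.1 = 0 then |f v| else (∑ w, |f w|) / Fintype.card V).bddAbove
  have : Nonempty (Fin (Fintype.card V)) := ⟨⟨0, by omega⟩⟩
  refine le_antisymm (ciSup_le fun k => ?_) (max_le ?_ ?_)
  · split_ifs
    exacts [le_max_left _ _, le_max_right _ _]
  · simpa using le_ciSup hbdd ⟨0, by omega⟩
  · simpa using le_ciSup hbdd ⟨1, h2⟩

theorem rpow_avg_le_sum_rpow_div (f : V → ℝ) {p : ℝ} (hp0 : 0 < p) (hp1 : p ≤ 1) :
    ((∑ w, |f w|) / Fintype.card V) ^ p ≤ (∑ w, |f w| ^ p) / (Fintype.card V : ℝ) ^ p := by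
  rw [Real.div_rpow (sum_nonneg fun _ _ => abs_nonneg _) (Nat.cast_nonneg _)]
  gcongr
  exact rpow_sum_le_sum_rpow_of_le_one _ (fun _ _ => abs_nonneg _) hp0 hp1

theorem sum_max_avg_rpow_le (f : V → ℝ) {p : ℝ} (hp0 : 0 < p) (hp1 : p ≤ 1) :
    ∑ v, max |f v| ((∑ w, |f w|) / Fintype.card V) ^ p
      ≤ (1 + ((Fintype.card V : ℝ) - 1) / (Fintype.card V : ℝ) ^ p) * ∑ v, |f v| ^ p := by
  cases isEmpty_or_nonempty V
  · simp
  set n : ℝ := (Fintype.card V : ℝ)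
  set A := (∑ w, |f w|) / n
  set S := ∑ v, |f v| ^ p
  have hn : 1 ≤ n := Nat.one_le_cast.mpr Fintype.card_pos
  obtain ⟨v₀, -, hv₀⟩ : ∃ v₀ ∈ univ, A ≤ |f v₀| :=
    exists_le_of_sum_le univ_nonempty (by simp [A, n]; field_simp; exact le_rfl)
  -- At `v₀` the maximum is `|f v₀|` itself, so only the other `n - 1` vertices pay `A ^ p`.
  calc ∑ v, max |f v| A ^ p
      = |f v₀| ^ p + ∑ v ∈ univ.erase v₀, max |f v| A ^ p := by
        rw [← add_sum_erase _ _ (mem_univ v₀), max_eq_left hv₀]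
    _ ≤ |f v₀| ^ p + ∑ v ∈ univ.erase v₀, (|f v| ^ p + A ^ p) := by
        gcongr with v
        exact max_rpow_le_rpow_add_rpow (abs_nonneg _) (by positivity) p
    _ = S + (n - 1) * A ^ p := by
        rw [sum_add_distrib, sum_const, ← add_assoc,
          add_sum_erase univ (fun v => |f v| ^ p) (mem_univ v₀),
          card_erase_of_mem (mem_univ v₀), card_univ, nsmul_eq_mul,
          Nat.cast_sub Fintype.card_pos, Nat.cast_one]
    _ ≤ S + (n - 1) * (S / n ^ p) := by
        gcongr
        exact rpow_avg_le_sum_rpow_div f hp0 hp1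
    _ = (1 + (n - 1) / n ^ p) * S := by ring

theorem pNorm_maxOp_top_le [Nontrivial V] (f : V → ℝ) {p : ℝ} (hp0 : 0 < p) (hp1 : p ≤ 1) :
    pNorm p (maxOp ⊤ f)
      ≤ (1 + ((Fintype.card V : ℝ) - 1) / (Fintype.card V : ℝ) ^ p) ^ (1 / p)
        * pNorm p f := by
  have hn : (1 : ℝ) ≤ Fintype.card V := by exact_mod_cast Fintype.card_pos
  have habs (v : V) : |maxOp ⊤ f v| = max |f v| ((∑ w, |f w|) / Fintype.card V) := by
    rw [maxOp_top, abs_of_nonneg (le_max_of_le_left (abs_nonneg _))]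
  have hC : 0 ≤ 1 + ((Fintype.card V : ℝ) - 1) / (Fintype.card V : ℝ) ^ p :=
    add_nonneg zero_le_one (div_nonneg (by linarith) (by positivity))
  rw [pNorm, pNorm, ← Real.mul_rpow hC (sum_nonneg fun _ _ => by positivity)]
  simp only [habs]
  gcongr
  exact sum_max_avg_rpow_le f hp0 hp1

theorem abs_single_one {ι : Type*} [DecidableEq ι] (i j : ι) :
    |(Pi.single i 1 : ι → ℝ) j| = (Pi.single i 1 : ι → ℝ) j := by
  rcases eq_or_ne j i with rfl | h <;> simp [*]

theorem pNorm_single_one {p : ℝ} (hp : 0 < p) (v₀ : V) :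
    pNorm p (Pi.single v₀ 1) = 1 := by
  have hval (v : V) : |(Pi.single v₀ 1 : V → ℝ) v| ^ p = (Pi.single v₀ 1 : V → ℝ) v := by
    rcases eq_or_ne v v₀ with rfl | hv
    · simp
    · simp [hv, Real.zero_rpow hp.ne']
  simp [pNorm, hval]

theorem pNorm_maxOp_top_single [Nontrivial V] (p : ℝ) (v₀ : V) :
    pNorm p (maxOp ⊤ (Pi.single v₀ 1))
      = (1 + ((Fintype.card V : ℝ) - 1) / (Fintype.card V : ℝ) ^ p) ^ (1 / p) := by
  have hn : (1 : ℝ) ≤ Fintype.card V := Nat.one_le_cast.mpr Fintype.card_pos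
  have hval (v : V) : |maxOp ⊤ (Pi.single v₀ 1) v| ^ p
      = if v = v₀ then 1 else 1 / (Fintype.card V : ℝ) ^ p := by
    simp only [maxOp_top, abs_single_one]
    rcases eq_or_ne v v₀ with rfl | hv
    · simp [inv_le_one_of_one_le₀ hn]
    · simp [hv, Real.inv_rpow (Nat.cast_nonneg _)]
  rw [pNorm, ← add_sum_erase _ _ (mem_univ v₀), hval, if_pos rfl,
    sum_congr rfl fun v hv => (hval v).trans (if_neg (ne_of_mem_erase hv)), sum_const,
    card_erase_of_mem (mem_univ v₀), card_univ, nsmul_eq_mul, Nat.cast_pred Fintype.card_pos,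
    mul_one_div]

theorem opNorm_top [Nontrivial V] {p : ℝ} (hp0 : 0 < p) (hp1 : p ≤ 1) :
    opNorm (⊤ : SimpleGraph V) p
      = (1 + ((Fintype.card V : ℝ) - 1) / (Fintype.card V : ℝ) ^ p) ^ (1 / p) := by
  obtain ⟨v₀⟩ := (inferInstance : Nonempty V)
  refine opNorm_eq_of_le_of_eq (fun f => pNorm_maxOp_top_le f hp0 hp1)
    (Pi.single_ne_zero_iff.mpr one_ne_zero : Pi.single v₀ (1 : ℝ) ≠ 0) ?_
  rw [pNorm_maxOp_top_single, pNorm_single_one hp0, mul_one]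

/-- exact ℓ^p norm of the maximal operator of the complete graph,
for 0 < p ≤ 1. -/
theorem stmt5 (n : ℕ) (hn : 2 ≤ n) (p : ℝ) (hp0 : 0 < p) (hp1 : p ≤ 1) :
    opNorm (⊤ : SimpleGraph (Fin n)) p
      = (1 + ((n : ℝ) - 1) / (n : ℝ) ^ p) ^ (1 / p) := by
  have := Fin.nontrivial_iff_two_le.mpr hn
  simpa using opNorm_top (V := Fin n) hp0 hp1
end
end

section
/- For every n ≥ 3, on the vertex set V = {1,…,n}, one has ‖M_{[L_n]}‖_1 = ‖M_{[S_n]}‖_1 = ‖M_{S_n}‖_1 = (n+1)/2, where the ℓ^1 operator norms are ‖T‖_1 = sup{‖Tf‖_1/‖f‖_1 : f ≢ 0}. -/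
/-!
On any graph, a ball around `v` is either `{v}`, where `|f|` averages to `|f v|`, or has at
least two points, where it averages to at most `‖f‖₁ / 2`. Hence `M f v ≤ (|f v| + ‖f‖₁) / 2`
for every graph, so also for the supremum over isomorphic copies, and summing over `v` gives
`‖M f‖₁ ≤ (n + 1) / 2 · ‖f‖₁`. A Kronecker delta `δ_k` attains this on a connected graph as
soon as every `v ≠ k` is a leaf hanging at `k`: then `M δ_k k = 1` and `M δ_k v = 1 / 2`. The
star is such a graph, and in a graph with one leaf any `v` can be relabelled into a leaf hanging
at any `k ≠ v`.
-/

open scoped Classical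
open Finset

noncomputable section

variable {V : Type*} [Fintype V]

set_option linter.unusedSectionVars false

lemma mem_gBall_self (G : SimpleGraph V) (v : V) (r : ℕ) : v ∈ gBall G v r := by
  simp [gBall]

lemma pNorm_one (f : V → ℝ) : pNorm 1 f = ∑ v, |f v| := by
  simp [pNorm]

lemma sum_abs_kdelta (k : V) (s : Finset V) :
    ∑ w ∈ s, |kdelta k w| = if k ∈ s then 1 else 0 := by
  simp [kdelta, apply_ite]

lemma pNorm_one_kdelta (k : V) : pNorm 1 (kdelta k) = 1 := by
  simp [pNorm_one, sum_abs_kdelta]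

lemma kdelta_ne_zero (k : V) : kdelta k ≠ 0 :=
  fun h => by simpa [kdelta] using congrFun h k

lemma sum_abs_div_card_le_abs_add_sum_abs_div_two {s : Finset V} {v : V} (hv : v ∈ s)
    (f : V → ℝ) :
    (∑ w ∈ s, |f w|) / #s ≤ (|f v| + ∑ w, |f w|) / 2 := by
  have hfv : |f v| ≤ ∑ w, |f w| :=
    single_le_sum (fun w _ => abs_nonneg (f w)) (mem_univ v)
  have hs : ∑ w ∈ s, |f w| ≤ ∑ w, |f w| :=
    sum_le_univ_sum_of_nonneg fun w => abs_nonneg (f w)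
  rcases (one_le_card.mpr ⟨v, hv⟩).eq_or_lt with h1 | h2
  · rw [eq_comm, card_eq_one] at h1
    obtain ⟨a, rfl⟩ := h1
    obtain rfl := mem_singleton.mp hv
    simp only [sum_singleton, card_singleton, Nat.cast_one, div_one]
    linarith
  · have h2' : (2 : ℝ) ≤ #s := by exact_mod_cast h2
    calc (∑ w ∈ s, |f w|) / #s ≤ (∑ w ∈ s, |f w|) / 2 :=
          div_le_div_of_nonneg_left (sum_nonneg fun w _ => abs_nonneg _) two_pos h2'
      _ ≤ (|f v| + ∑ w, |f w|) / 2 := by linarith [abs_nonneg (f v)]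

lemma average_le_maxOp (G : SimpleGraph V) (f : V → ℝ) (v : V) {r : ℕ}
    (hr : r < Fintype.card V) :
    (∑ w ∈ gBall G v r, |f w|) / #(gBall G v r) ≤ maxOp G f v :=
  le_ciSup (f := fun k : Fin (Fintype.card V) =>
    (∑ w ∈ gBall G v k.1, |f w|) / #(gBall G v k.1)) (Finite.bddAbove_range _) ⟨r, hr⟩

lemma maxOp_nonneg (G : SimpleGraph V) (f : V → ℝ) (v : V) : 0 ≤ maxOp G f v :=
  (div_nonneg (sum_nonneg fun w _ => abs_nonneg (f w)) (Nat.cast_nonneg _)).trans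
    (average_le_maxOp G f v (Fintype.card_pos_iff.mpr ⟨v⟩))

lemma maxOp_le_abs_add_sum_abs_div_two (G : SimpleGraph V) (f : V → ℝ) (v : V) :
    maxOp G f v ≤ (|f v| + ∑ w, |f w|) / 2 :=
  have : Nonempty (Fin (Fintype.card V)) := ⟨⟨0, Fintype.card_pos_iff.mpr ⟨v⟩⟩⟩
  ciSup_le fun k => sum_abs_div_card_le_abs_add_sum_abs_div_two (mem_gBall_self G v k) f

lemma maxOp_le_maxOpIso {G H : SimpleGraph V} (e : H ≃g G) (f : V → ℝ) (v : V) :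
    maxOp H f v ≤ maxOpIso G f v :=
  le_ciSup (f := fun H : {H : SimpleGraph V // Nonempty (H ≃g G)} => maxOp H.1 f v)
    (Finite.bddAbove_range _) ⟨H, ⟨e⟩⟩

lemma maxOpIso_nonneg (G : SimpleGraph V) (f : V → ℝ) (v : V) : 0 ≤ maxOpIso G f v :=
  (maxOp_nonneg G f v).trans (maxOp_le_maxOpIso .refl f v)

lemma maxOpIso_le_abs_add_sum_abs_div_two (G : SimpleGraph V) (f : V → ℝ) (v : V) :
    maxOpIso G f v ≤ (|f v| + ∑ w, |f w|) / 2 :=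
  have : Nonempty {H : SimpleGraph V // Nonempty (H ≃g G)} := ⟨⟨G, ⟨.refl⟩⟩⟩
  ciSup_le fun H => maxOp_le_abs_add_sum_abs_div_two H.1 f v

lemma SimpleGraph.Connected.gBall_zero {G : SimpleGraph V} (hG : G.Connected) (v : V) :
    gBall G v 0 = {v} := by
  ext w
  simp [gBall, hG.dist_eq_zero_iff, eq_comm]

lemma SimpleGraph.Connected.gBall_one_of_adj_iff {G : SimpleGraph V} (hG : G.Connected)
    {v k : V} (hleaf : ∀ w, G.Adj v w ↔ w = k) : gBall G v 1 = {v, k} := by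
  ext w
  rw [gBall, mem_filter, Nat.le_one_iff_eq_zero_or_eq_one, hG.dist_eq_zero_iff,
    SimpleGraph.dist_eq_one_iff_adj, hleaf, mem_insert, mem_singleton]
  simp [eq_comm]

lemma one_le_maxOp_kdelta_self {G : SimpleGraph V} (hG : G.Connected) (k : V) :
    1 ≤ maxOp G (kdelta k) k := by
  simpa [hG.gBall_zero, kdelta] using
    average_le_maxOp G (kdelta k) k (Fintype.card_pos_iff.mpr ⟨k⟩)

lemma half_le_maxOp_kdelta {G : SimpleGraph V} (hG : G.Connected) {v k : V}
    (hleaf : ∀ w, G.Adj v w ↔ w = k) : 1 / 2 ≤ maxOp G (kdelta k) v := by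
  have hvk : v ≠ k := ((hleaf k).mpr rfl).ne
  have hcard : 1 < Fintype.card V := by
    have := card_le_univ ({v, k} : Finset V)
    rw [card_pair hvk] at this
    omega
  simpa [hG.gBall_one_of_adj_iff hleaf, sum_abs_kdelta, card_pair hvk] using
    average_le_maxOp G (kdelta k) v hcard

lemma exists_equiv_apply_eq_and_apply_eq {v k a b : V} (hvk : v ≠ k) (hab : a ≠ b) :
    ∃ σ : V ≃ V, σ v = a ∧ σ k = b := by
  set τ := Equiv.swap v a
  have hτk : τ k ≠ a := by rw [← Equiv.swap_apply_left v a]; exact τ.injective.ne hvk.symm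
  refine ⟨τ.trans (Equiv.swap (τ k) b), ?_, Equiv.swap_apply_left _ _⟩
  simp only [Equiv.trans_apply, τ, Equiv.swap_apply_left]
  exact Equiv.swap_apply_of_ne_of_ne hτk.symm hab

/-- Relabelling the vertices turns the leaf `a` into any `v`, hanging at any other vertex `k`. -/
lemma half_le_maxOpIso_kdelta {G : SimpleGraph V} (hG : G.Connected) {a b : V}
    (hleaf : ∀ w, G.Adj a w ↔ w = b) {v k : V} (hvk : v ≠ k) :
    1 / 2 ≤ maxOpIso G (kdelta k) v := by
  obtain ⟨σ, hσv, hσk⟩ :=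
    exists_equiv_apply_eq_and_apply_eq hvk ((hleaf b).mpr rfl).ne
  have hleaf' : ∀ w, (G.comap σ).Adj v w ↔ w = k := fun w => by
    rw [SimpleGraph.comap_adj, hσv, hleaf, ← hσk, σ.apply_eq_iff_eq]
  have hconn : (G.comap σ).Connected := (SimpleGraph.Iso.comap σ G).connected_iff.mpr hG
  exact (half_le_maxOp_kdelta hconn hleaf').trans
    (maxOp_le_maxOpIso (SimpleGraph.Iso.comap σ G) _ v)

lemma pNorm_one_le_card_add_one_div_two_mul {g f : V → ℝ}
    (hg : ∀ v, |g v| ≤ (|f v| + ∑ w, |f w|) / 2) :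
    pNorm 1 g ≤ (Fintype.card V + 1) / 2 * pNorm 1 f := by
  rw [pNorm_one, pNorm_one]
  calc ∑ v, |g v| ≤ ∑ v, (|f v| + ∑ w, |f w|) / 2 := sum_le_sum fun v _ => hg v
    _ = (Fintype.card V + 1) / 2 * ∑ w, |f w| := by
      rw [← sum_div, sum_add_distrib, sum_const, card_univ, nsmul_eq_mul]
      ring

lemma card_add_one_div_two_le_pNorm_one {g : V → ℝ} {k : V} (hk : 1 ≤ g k)
    (hv : ∀ v ≠ k, 1 / 2 ≤ g v) :
    (Fintype.card V + 1) / 2 ≤ pNorm 1 g := by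
  have hrest : ∑ v ∈ univ.erase k, (1 / 2 : ℝ) ≤ ∑ v ∈ univ.erase k, |g v| :=
    sum_le_sum fun v hv' => (hv v (ne_of_mem_erase hv')).trans (le_abs_self _)
  rw [sum_const, card_erase_of_mem (mem_univ k), card_univ, nsmul_eq_mul,
    Nat.cast_pred (Fintype.card_pos_iff.mpr ⟨k⟩)] at hrest
  rw [pNorm_one, ← add_sum_erase _ _ (mem_univ k)]
  linarith [le_abs_self (g k)]

lemma iSup_pNorm_one_div_eq {T : (V → ℝ) → V → ℝ} {C : ℝ}
    (hle : ∀ f, pNorm 1 (T f) ≤ C * pNorm 1 f) {f₀ : V → ℝ} (hf₀ : f₀ ≠ 0)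
    (hge : C * pNorm 1 f₀ ≤ pNorm 1 (T f₀)) :
    ⨆ f : {f : V → ℝ // f ≠ 0}, pNorm 1 (T f.1) / pNorm 1 f.1 = C := by
  have hpos : ∀ f : V → ℝ, f ≠ 0 → 0 < pNorm 1 f := fun f hf => by
    obtain ⟨v, hv⟩ := Function.ne_iff.mp hf
    rw [pNorm_one]
    exact sum_pos' (fun w _ => abs_nonneg (f w)) ⟨v, mem_univ v, abs_pos.mpr hv⟩
  have hbound : ∀ f : {f : V → ℝ // f ≠ 0}, pNorm 1 (T f.1) / pNorm 1 f.1 ≤ C :=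
    fun f => (div_le_iff₀ (hpos f.1 f.2)).mpr (hle f.1)
  have : Nonempty {f : V → ℝ // f ≠ 0} := ⟨⟨f₀, hf₀⟩⟩
  refine le_antisymm (ciSup_le hbound) ?_
  calc C ≤ pNorm 1 (T f₀) / pNorm 1 f₀ := (le_div_iff₀ (hpos f₀ hf₀)).mpr hge
    _ ≤ _ := le_ciSup ⟨C, Set.forall_mem_range.mpr hbound⟩
        (⟨f₀, hf₀⟩ : {f : V → ℝ // f ≠ 0})

lemma iSup_pNorm_one_div_eq_card_add_one_div_two {T : (V → ℝ) → V → ℝ}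
    (hT : ∀ f v, |T f v| ≤ (|f v| + ∑ w, |f w|) / 2) {k : V} (hk : 1 ≤ T (kdelta k) k)
    (hv : ∀ v ≠ k, 1 / 2 ≤ T (kdelta k) v) :
    ⨆ f : {f : V → ℝ // f ≠ 0}, pNorm 1 (T f.1) / pNorm 1 f.1 = (Fintype.card V + 1) / 2 :=
  iSup_pNorm_one_div_eq (fun f => pNorm_one_le_card_add_one_div_two_mul (hT f))
    (kdelta_ne_zero k)
    (by rw [pNorm_one_kdelta, mul_one]; exact card_add_one_div_two_le_pNorm_one hk hv)

theorem opNormIso_one_eq_of_leaf {G : SimpleGraph V} (hG : G.Connected) {a b : V}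
    (hleaf : ∀ w, G.Adj a w ↔ w = b) : opNormIso G 1 = (Fintype.card V + 1) / 2 :=
  iSup_pNorm_one_div_eq_card_add_one_div_two
    (fun f v => (abs_of_nonneg (maxOpIso_nonneg G f v)).trans_le
      (maxOpIso_le_abs_add_sum_abs_div_two G f v))
    ((one_le_maxOp_kdelta_self hG a).trans (maxOp_le_maxOpIso .refl _ a))
    (fun _ hv => half_le_maxOpIso_kdelta hG hleaf hv)

theorem opNorm_one_eq_of_star {G : SimpleGraph V} (hG : G.Connected) {k : V}
    (hstar : ∀ v ≠ k, ∀ w, G.Adj v w ↔ w = k) : opNorm G 1 = (Fintype.card V + 1) / 2 :=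
  iSup_pNorm_one_div_eq_card_add_one_div_two
    (fun f v => (abs_of_nonneg (maxOp_nonneg G f v)).trans_le
      (maxOp_le_abs_add_sum_abs_div_two G f v))
    (one_le_maxOp_kdelta_self hG k)
    (fun v hv => half_le_maxOp_kdelta hG (hstar v hv))

lemma starGraph_adj {n : ℕ} [NeZero n] {i j : Fin n} :
    (starGraph n).Adj i j ↔ i ≠ j ∧ (i = 0 ∨ j = 0) := by
  rw [starGraph, SimpleGraph.fromRel_adj, Fin.val_eq_zero_iff, Fin.val_eq_zero_iff]

lemma starGraph_adj_iff_of_ne_zero {n : ℕ} [NeZero n] {v : Fin n} (hv : v ≠ 0) (w : Fin n) :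
    (starGraph n).Adj v w ↔ w = 0 := by
  rw [starGraph_adj]
  constructor
  · rintro ⟨-, h | h⟩
    exacts [absurd h hv, h]
  · rintro rfl
    exact ⟨hv, Or.inr rfl⟩

lemma starGraph_connected (n : ℕ) [NeZero n] : (starGraph n).Connected :=
  SimpleGraph.connected_iff_exists_forall_reachable _ |>.mpr ⟨0, fun w => by
    rcases eq_or_ne w 0 with rfl | hw
    · rfl
    · exact ((starGraph_adj_iff_of_ne_zero hw 0).mpr rfl).symm.reachable⟩

lemma pathGraph_adj_zero_iff {m : ℕ} (w : Fin (m + 2)) :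
    (SimpleGraph.pathGraph (m + 2)).Adj 0 w ↔ w = 1 := by
  rw [SimpleGraph.pathGraph_adj, Fin.ext_iff, Fin.val_zero, Fin.val_one]
  omega

/-- the ℓ¹ norms of the isomorphism-maximal operators of the path
and the star, and of the maximal operator of the star. -/
theorem stmt11 (n : ℕ) (hn : 3 ≤ n) :
    opNormIso (SimpleGraph.pathGraph n) 1 = ((n : ℝ) + 1) / 2 ∧
    opNormIso (starGraph n) 1 = ((n : ℝ) + 1) / 2 ∧
    opNorm (starGraph n) 1 = ((n : ℝ) + 1) / 2 := by
  obtain ⟨m, rfl⟩ : ∃ m, n = m + 2 := ⟨n - 2, by omega⟩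
  have hstar := starGraph_connected (m + 2)
  have hleaf : ∀ w, (starGraph (m + 2)).Adj 1 w ↔ w = 0 :=
    starGraph_adj_iff_of_ne_zero one_ne_zero
  rw [show ((m + 2 : ℕ) : ℝ) = Fintype.card (Fin (m + 2)) by rw [Fintype.card_fin]]
  exact ⟨opNormIso_one_eq_of_leaf (SimpleGraph.pathGraph_connected (m + 1))
      pathGraph_adj_zero_iff,
    opNormIso_one_eq_of_leaf hstar hleaf,
    opNorm_one_eq_of_star hstar fun _ hv => starGraph_adj_iff_of_ne_zero hv⟩
end
end
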